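/- A commutative reduced ring R has no sd-ideal if and only if R satisfies property (A) and the minimal prime spectrum Min(R) with the Zariski topology is compact. -/

import Mathlib

/-!
In a reduced ring a finitely generated ideal has a nonzero annihilator exactly when it lies in
a minimal prime: an element of a minimal prime `P` is killed by some element outside `P`, because
`R_P` is a reduced local ring with a single prime, and a nonzero element avoids some minimal prime,
because the minimal primes intersect in the nilradical. Hence property (A) says that every
finitely generated ideal of zero divisors lies in a minimal prime, and "no sd-ideal" says the same
for every ideal of zero divisors. Compactness of `Min(R)`, tested on covers by basic opens `D(a)`,
is precisely the passage from finite subsets of an ideal to the whole ideal; and an ideal all of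
whose finite subsets lie in minimal primes consists of zero divisors.
-/

/-- The minimal prime spectrum of `R`, with the subspace (Zariski) topology. -/
abbrev MinSpec (R : Type*) [CommRing R] :=
  {P : PrimeSpectrum R // P.asIdeal ∈ minimalPrimes R}

section Reduced

variable {R : Type*} [CommRing R] [IsReduced R] {P : Ideal R}

theorem exists_notMem_mul_eq_zero_of_mem_minimalPrimes (hP : P ∈ minimalPrimes R) {x : R}
    (hx : x ∈ P) : ∃ c ∉ P, c * x = 0 := by
  have := hP.isPrime
  -- In the reduced local ring `R_P` the maximal ideal `P R_P` is the nilradical, hence zero.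
  have hPR : P.map (algebraMap R (Localization.AtPrime P)) = ⊥ := by
    rw [← IsLocalization.AtPrime.radical_map_of_mem_minimalPrimes _ P ⊥ hP, Ideal.map_bot,
      Ideal.radical_bot_of_isReduced]
  obtain ⟨⟨c, hc⟩, hcx⟩ := (IsLocalization.map_eq_zero_iff P.primeCompl _ x).mp <| by
    simpa [hPR] using Ideal.mem_map_of_mem (algebraMap R (Localization.AtPrime P)) hx
  exact ⟨c, hc, hcx⟩

theorem exists_notMem_forall_mul_eq_zero_of_fg_of_le_minimalPrimes (hP : P ∈ minimalPrimes R)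
    {I : Ideal R} (hI : I.FG) (hIP : I ≤ P) : ∃ c ∉ P, ∀ x ∈ I, c * x = 0 := by
  have := hP.isPrime
  obtain ⟨s, rfl⟩ := hI
  choose! c hcP hcx using fun x (hx : x ∈ s) ↦
    exists_notMem_mul_eq_zero_of_mem_minimalPrimes hP (Ideal.span_le.mp hIP hx)
  refine ⟨∏ x ∈ s, c x, fun h ↦ ?_, fun x hx ↦ ?_⟩
  · obtain ⟨x, hx, hxP⟩ := Ideal.IsPrime.prod_mem_iff.mp h
    exact hcP x hx hxP
  · refine Submodule.mem_annihilator.mp ((Submodule.mem_annihilator_span _ _).mpr ?_) x hx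
    rintro ⟨y, hy⟩
    obtain ⟨d, hd⟩ := Finset.dvd_prod_of_mem c hy
    rw [smul_eq_mul, hd, mul_right_comm, hcx y hy, zero_mul]

theorem exists_minimalPrimes_notMem {a : R} (ha : a ≠ 0) : ∃ P ∈ minimalPrimes R, a ∉ P := by
  by_contra! h
  have : a ∈ sInf (minimalPrimes R) := Ideal.mem_sInf.mpr fun Q hQ ↦ h Q hQ
  rw [minimalPrimes, Ideal.sInf_minimalPrimes, Ideal.radical_bot_of_isReduced] at this
  exact ha this

theorem exists_ne_zero_forall_mul_eq_zero_iff_exists_minimalPrimes_le {I : Ideal R}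
    (hI : I.FG) : (∃ a ≠ 0, ∀ x ∈ I, a * x = 0) ↔ ∃ P ∈ minimalPrimes R, I ≤ P := by
  constructor
  · rintro ⟨a, ha, haI⟩
    obtain ⟨P, hP, haP⟩ := exists_minimalPrimes_notMem ha
    exact ⟨P, hP, fun x hx ↦ (hP.isPrime.mem_or_mem (haI x hx ▸ P.zero_mem)).resolve_left haP⟩
  · rintro ⟨P, hP, hIP⟩
    obtain ⟨c, hcP, hc⟩ := exists_notMem_forall_mul_eq_zero_of_fg_of_le_minimalPrimes hP hI hIP
    exact ⟨c, fun h ↦ hcP (h ▸ P.zero_mem), hc⟩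

end Reduced

namespace PrimeSpectrum

variable {R : Type*} [CommRing R]

theorem isCompact_iff_forall_finset_subset {s : Set (PrimeSpectrum R)} :
    IsCompact s ↔ ∀ S : Set R, (∀ F : Finset R, ↑F ⊆ S → ∃ p ∈ s, ↑F ⊆ (p.asIdeal : Set R)) →
      ∃ p ∈ s, S ⊆ p.asIdeal := by
  constructor
  · intro hs S hS
    by_contra! h
    obtain ⟨u, hu⟩ := hs.elim_finite_subfamily_closed (fun a : S ↦ zeroLocus {(a : R)})
      (fun _ ↦ isClosed_zeroLocus _) <| by
        ext p
        simpa [Set.subset_def] using h p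
    obtain ⟨p, hps, hp⟩ := hS (u.map (Function.Embedding.subtype _)) (by simp)
    exact hu.subset ⟨hps, by simpa [Set.subset_def] using hp⟩
  · intro H
    refine isCompact_of_finite_subfamily_closed fun t htc hst ↦ ?_
    choose T hT using fun i ↦ (isClosed_iff_zeroLocus _).mp (htc i)
    by_contra! hne
    have hfin (F : Finset R) (hF : ↑F ⊆ ⋃ i, T i) : ∃ p ∈ s, ↑F ⊆ (p.asIdeal : Set R) := by
      obtain ⟨I, hI, hFI⟩ := Set.finite_subset_iUnion F.finite_toSet hF
      obtain ⟨p, hps, hp⟩ := hne hI.toFinset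
      refine ⟨p, hps, hFI.trans (Set.iUnion₂_subset fun i hi ↦ ?_)⟩
      have := Set.mem_iInter₂.mp hp i (hI.mem_toFinset.mpr hi)
      rwa [hT, mem_zeroLocus] at this
    obtain ⟨p, hps, hp⟩ := H (⋃ i, T i) hfin
    refine hst.subset ⟨hps, Set.mem_iInter.mpr fun i ↦ ?_⟩
    rw [hT, mem_zeroLocus]
    exact (Set.subset_iUnion T i).trans hp

end PrimeSpectrum

theorem compactSpace_minSpec_iff {R : Type*} [CommRing R] :
    CompactSpace (MinSpec R) ↔ IsCompact {p : PrimeSpectrum R | p.asIdeal ∈ minimalPrimes R} :=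
  isCompact_iff_compactSpace.symm

theorem notMem_nonZeroDivisors_of_mem_span {R : Type*} [CommRing R] {S : Set R}
    (hS : ∀ F : Finset R, ↑F ⊆ S → ∃ p : PrimeSpectrum R,
      p.asIdeal ∈ minimalPrimes R ∧ ↑F ⊆ (p.asIdeal : Set R))
    {x : R} (hx : x ∈ Ideal.span S) : x ∉ nonZeroDivisors R := by
  obtain ⟨F, hFS, hxF⟩ := Submodule.mem_span_finite_of_mem_span hx
  obtain ⟨p, hp, hFp⟩ := hS F hFS
  exact notMem_nonZeroDivisors_of_mem_mem_minimalPrimes (Ideal.span_le.mpr hFp hxF) hp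

/-- R has no sd-ideal iff R has property (A) and Min(R) is compact. -/
theorem no_sd_iff_propA_and_compact (R : Type*) [CommRing R] [IsReduced R] :
    (¬ ∃ I : Ideal R, (∀ x ∈ I, x ∉ nonZeroDivisors R) ∧
        ∀ P ∈ minimalPrimes R, ¬ I ≤ P) ↔
    ((∀ I : Ideal R, I.FG → (∀ x ∈ I, x ∉ nonZeroDivisors R) →
        ∃ a : R, a ≠ 0 ∧ ∀ x ∈ I, a * x = 0) ∧
      CompactSpace (MinSpec R)) := by
  rw [compactSpace_minSpec_iff, PrimeSpectrum.isCompact_iff_forall_finset_subset]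
  push Not
  constructor
  · intro H
    refine ⟨fun I hI hIZ ↦
      (exists_ne_zero_forall_mul_eq_zero_iff_exists_minimalPrimes_le hI).mpr (H I hIZ),
      fun S hS ↦ ?_⟩
    obtain ⟨P, hP, hSP⟩ := H (Ideal.span S) fun x ↦ notMem_nonZeroDivisors_of_mem_span hS
    exact ⟨⟨P, hP.isPrime⟩, hP, Ideal.span_le.mp hSP⟩
  · rintro ⟨hA, hC⟩ I hIZ
    obtain ⟨p, hp, hIp⟩ := hC I fun F hF ↦ by
      have hFI : Ideal.span (F : Set R) ≤ I := Ideal.span_le.mpr hF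
      obtain ⟨P, hP, hFP⟩ := (exists_ne_zero_forall_mul_eq_zero_iff_exists_minimalPrimes_le
        ⟨F, rfl⟩).mp (hA _ ⟨F, rfl⟩ fun x hx ↦ hIZ x (hFI hx))
      exact ⟨⟨P, hP.isPrime⟩, hP, Ideal.span_le.mp hFP⟩
    exact ⟨p.asIdeal, hp, hIp⟩
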